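/- Let A be a complex Banach algebra with a character φ. Suppose that for all Banach right A-modules X and Y, where the action of A on Y is given by y·a = φ(a) y, the following holds: every bounded linear map T : X* → Y* which is continuous with respect to the weak* topologies, is a left A-module morphism (T(a·u) = a·T(u), with (a·u)(x) = u(x·a)), and admits a bounded linear right inverse, admits a bounded linear right inverse that is a left A-module morphism. Then A is φ-amenable. -/
import Mathlib

set_option maxHeartbeats 1000000
set_option synthInstance.maxHeartbeats 200000


/-- A (possibly non-unital) complex Banach algebra `A` with a character `φ` is
`φ`-amenable if there is `m ∈ A**` with `m(φ) = 1` and `a·m = φ(a)·m` for all `a ∈ A`. -/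
def PhiAmenable (A : Type*) [NonUnitalNormedRing A] [NormedSpace ℂ A] [IsScalarTower ℂ A A]
    [SMulCommClass ℂ A A] (φ : A →L[ℂ] ℂ) : Prop :=
  ∃ m : (A →L[ℂ] ℂ) →L[ℂ] ℂ, m φ = 1 ∧
    ∀ (a : A) (f : A →L[ℂ] ℂ), m (f.comp (ContinuousLinearMap.mul ℂ A a)) = φ a * m f

/-- Suppose that for all Banach right `A`-modules `X` (action `σ`, with `σ a x = x·a`) and
all Banach spaces `Y` carrying the right `A`-action `y·a = φ(a) y`, every bounded linear
map `T : X* → Y*` which is weak*-weak* continuous, a left `A`-module morphism, and has a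
bounded linear right inverse, has a bounded linear right inverse which is a left
`A`-module morphism.  Then `A` is `φ`-amenable. -/
theorem phiAmenable_of_right_inverse_property.{u} (A : Type u) [NonUnitalNormedRing A]
    [NormedSpace ℂ A] [IsScalarTower ℂ A A] [SMulCommClass ℂ A A] [CompleteSpace A]
    (φ : A →L[ℂ] ℂ) (hφmul : ∀ a b : A, φ (a * b) = φ a * φ b) (hφne : φ ≠ 0)
    (H : ∀ (X : Type u) [NormedAddCommGroup X] [NormedSpace ℂ X] [CompleteSpace X]
      (Y : Type u) [NormedAddCommGroup Y] [NormedSpace ℂ Y] [CompleteSpace Y]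
      (σ : A →L[ℂ] X →L[ℂ] X), (∀ a b : A, σ (a * b) = (σ b).comp (σ a)) →
      (∀ (a : A) (x : X), ‖σ a x‖ ≤ ‖x‖ * ‖a‖) →
      ∀ T : (X →L[ℂ] ℂ) →L[ℂ] (Y →L[ℂ] ℂ),
        Continuous (fun u : WeakDual ℂ X => (T u : WeakDual ℂ Y)) →
        (∀ (a : A) (u : X →L[ℂ] ℂ), T (u.comp (σ a)) = φ a • T u) →
        (∃ F : (Y →L[ℂ] ℂ) →L[ℂ] (X →L[ℂ] ℂ),
          T.comp F = ContinuousLinearMap.id ℂ (Y →L[ℂ] ℂ)) →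
        ∃ Θ : (Y →L[ℂ] ℂ) →L[ℂ] (X →L[ℂ] ℂ),
          T.comp Θ = ContinuousLinearMap.id ℂ (Y →L[ℂ] ℂ) ∧
          ∀ (a : A) (v : Y →L[ℂ] ℂ) (x : X), Θ v (σ a x) = φ a * Θ v x) :
    PhiAmenable A φ := by
  classical
  -- the right module X = A*, with action f·a = f ∘ (left mult by a)
  let σ : A →L[ℂ] (A →L[ℂ] ℂ) →L[ℂ] (A →L[ℂ] ℂ) :=
    ((ContinuousLinearMap.compL ℂ A A ℂ).flip).comp (ContinuousLinearMap.mul ℂ A)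
  have hσ : ∀ (a : A) (f : A →L[ℂ] ℂ), σ a f = f.comp (ContinuousLinearMap.mul ℂ A a) :=
    fun _ _ => rfl
  have hσ' : ∀ (a : A) (f : A →L[ℂ] ℂ) (c : A), σ a f c = f (a * c) := fun _ _ _ => rfl
  have hσmul : ∀ a b : A, σ (a * b) = (σ b).comp (σ a) := by
    intro a b
    refine ContinuousLinearMap.ext fun f => ContinuousLinearMap.ext fun c => ?_
    show f ((a * b) * c) = f (a * (b * c))
    rw [mul_assoc]
  have hσnorm : ∀ (a : A) (f : A →L[ℂ] ℂ), ‖σ a f‖ ≤ ‖f‖ * ‖a‖ := by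
    intro a f
    rw [hσ]
    calc ‖f.comp (ContinuousLinearMap.mul ℂ A a)‖
        ≤ ‖f‖ * ‖ContinuousLinearMap.mul ℂ A a‖ := ContinuousLinearMap.opNorm_comp_le _ _
      _ ≤ ‖f‖ * ‖a‖ := by
          gcongr
          exact ContinuousLinearMap.opNorm_mul_apply_le ℂ A a
  -- the "evaluation" functional on Y = ULift ℂ
  let e : ULift.{u} ℂ →L[ℂ] ℂ :=
    (ContinuousLinearEquiv.ulift : ULift.{u} ℂ ≃L[ℂ] ℂ).toContinuousLinearMap
  have he : ∀ y : ULift.{u} ℂ, e y = y.down := fun _ => rfl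
  have hyval : ∀ (v : ULift.{u} ℂ →L[ℂ] ℂ) (y : ULift.{u} ℂ),
      v y = y.down * v (ULift.up 1) := by
    intro v y
    have hy : y = y.down • (ULift.up (1 : ℂ)) := by
      apply ULift.ext
      simp
    rw [hy]
    simp
  -- T : X* → Y*, T μ = μ(φ) • e
  let T : ((A →L[ℂ] ℂ) →L[ℂ] ℂ) →L[ℂ] (ULift.{u} ℂ →L[ℂ] ℂ) :=
    (ContinuousLinearMap.apply ℂ ℂ φ).smulRight e
  have hT : ∀ μ : (A →L[ℂ] ℂ) →L[ℂ] ℂ, T μ = μ φ • e := fun _ => rfl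
  -- T is a module morphism
  have hφcomp : ∀ a : A, φ.comp (ContinuousLinearMap.mul ℂ A a) = φ a • φ := by
    intro a
    refine ContinuousLinearMap.ext fun b => ?_
    show φ (a * b) = φ a • φ b
    rw [hφmul a b, smul_eq_mul]
  have hTmod : ∀ (a : A) (u : (A →L[ℂ] ℂ) →L[ℂ] ℂ), T (u.comp (σ a)) = φ a • T u := by
    intro a u
    rw [hT, hT]
    have h1 : (u.comp (σ a)) φ = φ a * u φ := by
      rw [ContinuousLinearMap.comp_apply, hσ, hφcomp a, map_smul, smul_eq_mul]
    rw [h1, smul_smul]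
  -- a bounded right inverse F, using a₀ with φ a₀ = 1
  obtain ⟨b, hb⟩ : ∃ b : A, φ b ≠ 0 := by
    by_contra h
    push_neg at h
    exact hφne (by ext c; simp [h c])
  have ha₀ : φ ((φ b)⁻¹ • b) = 1 := by
    rw [map_smul, smul_eq_mul, inv_mul_cancel₀ hb]
  set a₀ : A := (φ b)⁻¹ • b with ha₀def
  have hF : ∃ F : (ULift.{u} ℂ →L[ℂ] ℂ) →L[ℂ] ((A →L[ℂ] ℂ) →L[ℂ] ℂ),
      T.comp F = ContinuousLinearMap.id ℂ (ULift.{u} ℂ →L[ℂ] ℂ) := by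
    refine ⟨(ContinuousLinearMap.apply ℂ ℂ (ULift.up (1 : ℂ))).smulRight
      (ContinuousLinearMap.apply ℂ ℂ a₀), ?_⟩
    refine ContinuousLinearMap.ext fun v => ContinuousLinearMap.ext fun y => ?_
    rw [ContinuousLinearMap.comp_apply, ContinuousLinearMap.id_apply, hT]
    simp only [ContinuousLinearMap.smulRight_apply, ContinuousLinearMap.smul_apply,
      ContinuousLinearMap.apply_apply, he, smul_eq_mul, ha₀, mul_one]
    rw [hyval v y]
    ring
  obtain ⟨Θ, hΘ1, hΘ2⟩ := H (A →L[ℂ] ℂ) (ULift.{u} ℂ) σ hσmul hσnorm T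
    (by
      have hcont : Continuous (fun u : WeakDual ℂ (A →L[ℂ] ℂ) => T u) := by
        have : (fun u : WeakDual ℂ (A →L[ℂ] ℂ) => T u)
            = fun u : WeakDual ℂ (A →L[ℂ] ℂ) =>
              ((u : (A →L[ℂ] ℂ) →L[ℂ] ℂ) φ) • e := by
          funext u
          exact hT u
        rw [this]
        exact (WeakDual.eval_continuous φ).smul continuous_const
      exact hcont)
    hTmod hF
  refine ⟨Θ e, ?_, ?_⟩
  · have h1 : T (Θ e) = e := by
      have h2 := congrArg (fun G => G e) hΘ1
      simpa using h2
    have h3 := congrArg (fun w => w (ULift.up (1 : ℂ))) h1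
    rw [hT] at h3
    simpa [he] using h3
  · intro a f
    have h4 := hΘ2 a e f
    rw [hσ] at h4
    exact h4
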